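/- Fix n ≥ 1 and let S ⊆ ℕ^{2n} be the submonoid of vectors a with Σ_{i=1}^{n}(a_{2i-1} + 2a_{2i}) ≡ 0 (mod 3). Each of the elements e*_{2i} + e*_{2j-1}, e*_{2i} + e*_{2j} + e*_{2k}, and e*_{2i-1} + e*_{2j-1} + e*_{2k-1} is irreducible in S, i.e., cannot be written as a sum of two nonzero elements of S. -/

import Mathlib

/-!
Give the coordinates `e*_{2i-1}` weight `1` and `e*_{2i}` weight `2`; the resulting weight is an
additive map `ℕ^{2n} → ℕ` vanishing only at `0`, and `S` consists of the vectors of weight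
divisible by `3`. The generators of the first and third kind have weight `3`, so any splitting of
them in `S` has a summand of weight `0`. The generator of the second kind has weight `6` and lives
on the coordinates `e*_{2i}`, as does every summand of it; such summands have even weight,
hence weight `0` or `6`.
-/

def IsIrreducibleIn {M : Type*} [Zero M] [Add M] (S : Set M) (g : M) : Prop :=
  g ≠ 0 ∧ ∀ x ∈ S, ∀ y ∈ S, g = x + y → x = 0 ∨ y = 0

namespace PairWeight

variable {n : ℕ}

-- With 0-based `i`, `pairFst i` and `pairSnd i` are the paper's `e*_{2i+1}` and `e*_{2i+2}`.
abbrev pairFst (i : Fin n) : Fin (2 * n) := ⟨2 * i.1, by omega⟩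

abbrev pairSnd (i : Fin n) : Fin (2 * n) := ⟨2 * i.1 + 1, by omega⟩

lemma pairFst_injective : Function.Injective (pairFst (n := n)) := fun i j h => by
  simp only [Fin.ext_iff] at h ⊢; omega

lemma pairSnd_injective : Function.Injective (pairSnd (n := n)) := fun i j h => by
  simp only [Fin.ext_iff] at h ⊢; omega

lemma pairFst_ne_pairSnd (i j : Fin n) : pairFst i ≠ pairSnd j := by
  simp only [ne_eq, Fin.ext_iff]; omega

lemma exists_eq_pairFst_or_eq_pairSnd (q : Fin (2 * n)) : ∃ i, q = pairFst i ∨ q = pairSnd i :=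
  ⟨⟨q.1 / 2, by omega⟩, by simp only [Fin.ext_iff]; omega⟩

variable (n) in
def weight : (Fin (2 * n) → ℕ) →+ ℕ where
  toFun a := ∑ i, (a (pairFst i) + 2 * a (pairSnd i))
  map_zero' := by simp
  map_add' a b := by
    simp only [Pi.add_apply, ← Finset.sum_add_distrib]
    exact Finset.sum_congr rfl fun _ _ => by ring

lemma weight_apply (a : Fin (2 * n) → ℕ) :
    weight n a = ∑ i, (a (pairFst i) + 2 * a (pairSnd i)) := rfl

lemma weight_eq_zero_iff {a : Fin (2 * n) → ℕ} : weight n a = 0 ↔ a = 0 := by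
  refine ⟨fun h => funext fun q => ?_, fun h => h ▸ map_zero _⟩
  have hi := Finset.sum_eq_zero_iff.mp (weight_apply a ▸ h)
  obtain ⟨i, rfl | rfl⟩ := exists_eq_pairFst_or_eq_pairSnd q <;>
    · have := hi i (Finset.mem_univ _); simp only [Pi.zero_apply]; omega

lemma weight_single_pairFst (i : Fin n) (c : ℕ) : weight n (Pi.single (pairFst i) c) = c := by
  rw [weight_apply, Fintype.sum_eq_single i fun j hj => by
    simp [pairFst_injective.eq_iff, hj, (pairFst_ne_pairSnd i j).symm]]
  simp

lemma weight_single_pairSnd (i : Fin n) (c : ℕ) :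
    weight n (Pi.single (pairSnd i) c) = 2 * c := by
  rw [weight_apply, Fintype.sum_eq_single i fun j hj => by
    simp [pairSnd_injective.eq_iff, hj, pairFst_ne_pairSnd j i]]
  simp

lemma two_dvd_weight {a : Fin (2 * n) → ℕ} (ha : ∀ i, a (pairFst i) = 0) :
    2 ∣ weight n a := by
  rw [weight_apply]
  exact Finset.dvd_sum fun i _ => by simp [ha i]

lemma isIrreducibleIn_of_weight_eq_three {g : Fin (2 * n) → ℕ} (hg : weight n g = 3) :
    IsIrreducibleIn {a | weight n a % 3 = 0} g := by
  refine ⟨fun h => by simp [h] at hg, fun x hx y hy hxy => ?_⟩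
  have hsum : weight n x + weight n y = 3 := by rw [← map_add, ← hxy, hg]
  simp only [← weight_eq_zero_iff]
  simp only [Set.mem_ofPred_eq] at hx hy
  omega

lemma isIrreducibleIn_of_weight_eq_six {g : Fin (2 * n) → ℕ} (hg : weight n g = 6)
    (hg_fst : ∀ i, g (pairFst i) = 0) : IsIrreducibleIn {a | weight n a % 3 = 0} g := by
  refine ⟨fun h => by simp [h] at hg, fun x hx y hy hxy => ?_⟩
  have hsum : weight n x + weight n y = 6 := by rw [← map_add, ← hxy, hg]
  have hx_even : 2 ∣ weight n x := two_dvd_weight fun i => by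
    have := congrFun hxy (pairFst i)
    simp only [hg_fst, Pi.add_apply] at this
    omega
  simp only [← weight_eq_zero_iff]
  simp only [Set.mem_ofPred_eq] at hx hy
  omega

end PairWeight

open PairWeight in
/-- In the monoid `S = {a ∈ ℕ^{2n} : 3 ∣ Σᵢ (a_{2i-1} + 2 a_{2i})}`, each of the elements
`e*_{2i} + e*_{2j-1}`, `e*_{2i} + e*_{2j} + e*_{2k}` and `e*_{2i-1} + e*_{2j-1} + e*_{2k-1}`
is irreducible: it is nonzero and cannot be written as a sum of two nonzero elements of `S`.
(0-based: `e*_{2i}` is `Pi.single ⟨2i+1⟩ 1` and `e*_{2i-1}` is `Pi.single ⟨2i⟩ 1`.) -/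
theorem stmt_6 (n : ℕ)
    (S : Set (Fin (2 * n) → ℕ))
    (hS : S = {a | (∑ i : Fin n, (a ⟨2 * i.1, by have := i.2; omega⟩ +
        2 * a ⟨2 * i.1 + 1, by have := i.2; omega⟩)) % 3 = 0})
    (G : Set (Fin (2 * n) → ℕ))
    (hG : G = {x | (∃ i j : Fin n, x =
        Pi.single ⟨2 * i.1 + 1, by have := i.2; omega⟩ 1 +
        Pi.single ⟨2 * j.1, by have := j.2; omega⟩ 1) ∨
      (∃ i j k : Fin n, x =
        Pi.single ⟨2 * i.1 + 1, by have := i.2; omega⟩ 1 +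
        Pi.single ⟨2 * j.1 + 1, by have := j.2; omega⟩ 1 +
        Pi.single ⟨2 * k.1 + 1, by have := k.2; omega⟩ 1) ∨
      (∃ i j k : Fin n, x =
        Pi.single ⟨2 * i.1, by have := i.2; omega⟩ 1 +
        Pi.single ⟨2 * j.1, by have := j.2; omega⟩ 1 +
        Pi.single ⟨2 * k.1, by have := k.2; omega⟩ 1)}) :
    ∀ g ∈ G, g ≠ 0 ∧ ∀ x ∈ S, ∀ y ∈ S, g = x + y → x = 0 ∨ y = 0 := by
  subst hS hG
  rintro g (⟨i, j, rfl⟩ | ⟨i, j, k, rfl⟩ | ⟨i, j, k, rfl⟩)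
  · exact isIrreducibleIn_of_weight_eq_three (by
      simp only [map_add, weight_single_pairFst, weight_single_pairSnd])
  · exact isIrreducibleIn_of_weight_eq_six
      (by simp only [map_add, weight_single_pairSnd])
      (fun m => by simp [Pi.single_apply]; omega)
  · exact isIrreducibleIn_of_weight_eq_three (by simp only [map_add, weight_single_pairFst])
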